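/- Let n ≥ 1, δ > 0, let A : ℝ^n → Sym_n(ℝ) with A(y) positive semidefinite for every y, let H : ℝ^n × ℝ^n → ℝ, and fix p ∈ ℝ^n. Suppose u, v : ℝ^n → ℝ are C², ℤ^n-periodic and satisfy −tr(A(y) D²u(y)) + H(∇u(y) + p, y) + δ u(y) ≤ 0 and −tr(A(y) D²v(y)) + H(∇v(y) + p, y) + δ v(y) ≥ 0 for all y ∈ ℝ^n. Then u(y) ≤ v(y) for all y ∈ ℝ^n. (Comparison principle for the δ-penalized cell equation.) -/

import Mathlib

open scoped InnerProductSpace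

/-- The Hessian matrix of `w : ℝⁿ → ℝ` at `y`, with entries the iterated directional
derivatives along the standard basis vectors. -/
noncomputable def hessM {n : ℕ} (w : EuclideanSpace ℝ (Fin n) → ℝ)
    (y : EuclideanSpace ℝ (Fin n)) : Matrix (Fin n) (Fin n) ℝ :=
  fun i j =>
    fderiv ℝ (fun z => fderiv ℝ w z (EuclideanSpace.single j 1)) y (EuclideanSpace.single i 1)

/-- An integer vector `k ∈ ℤⁿ` viewed as an element of `ℝⁿ`. -/
noncomputable def intVec {n : ℕ} (k : Fin n → ℤ) : EuclideanSpace ℝ (Fin n) :=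
  (WithLp.equiv 2 (Fin n → ℝ)).symm (fun i => (k i : ℝ))

/-- A function on `ℝⁿ` is `ℤⁿ`-periodic. -/
def ZPeriodic {n : ℕ} (f : EuclideanSpace ℝ (Fin n) → ℝ) : Prop :=
  ∀ (y : EuclideanSpace ℝ (Fin n)) (k : Fin n → ℤ), f (y + intVec k) = f y

/-!
At a maximum point `y₀` of the periodic function `u - v` (which exists by compactness of the
unit cube) the gradients of `u` and `v` agree and the Hessian of `u - v` is negative
semidefinite, so `tr (A (D²u - D²v)) ≤ 0` because `A` is positive semidefinite. Subtracting the two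
inequalities at `y₀` leaves `δ (u - v)(y₀) ≤ 0`.
-/

open Filter Topology

theorem ZPeriodic.sub {n : ℕ} {f g : EuclideanSpace ℝ (Fin n) → ℝ} (hf : ZPeriodic f)
    (hg : ZPeriodic g) : ZPeriodic (f - g) := fun y k => by
  simp only [Pi.sub_apply, hf y k, hg y k]

theorem ZPeriodic.exists_forall_le {n : ℕ} {f : EuclideanSpace ℝ (Fin n) → ℝ}
    (hf : ZPeriodic f) (hc : Continuous f) : ∃ y₀, ∀ y, f y ≤ f y₀ := by
  set K := WithLp.toLp 2 '' Set.Icc (0 : Fin n → ℝ) 1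
  have hK : IsCompact K := isCompact_Icc.image (PiLp.continuous_toLp 2 _)
  obtain ⟨y₀, -, hmax⟩ :=
    hK.exists_isMaxOn (Set.nonempty_Icc.2 zero_le_one |>.image _) hc.continuousOn
  refine ⟨y₀, fun y => ?_⟩
  set k : Fin n → ℤ := fun i => ⌊y i⌋
  have hfract : y - intVec k ∈ K :=
    ⟨fun i => Int.fract (y i), ⟨fun i => Int.fract_nonneg _, fun i => (Int.fract_lt_one _).le⟩,
      by ext i; simp [k, intVec]⟩
  calc f y = f (y - intVec k + intVec k) := by rw [sub_add_cancel]
    _ = f (y - intVec k) := hf _ _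
    _ ≤ f y₀ := hmax hfract

/-- If `f'' a > 0`, the second-derivative test makes `a` a local minimum as well, so `f` is
locally constant and `f'' a = 0`. -/
theorem IsLocalMax.deriv_deriv_nonpos {f : ℝ → ℝ} {a : ℝ} (h : IsLocalMax f a)
    (hc : ContinuousAt f a) : deriv (deriv f) a ≤ 0 := by
  by_contra! hpos
  have hconst : f =ᶠ[𝓝 a] fun _ => f a :=
    (h.and (isLocalMin_of_deriv_deriv_pos hpos h.deriv_eq_zero hc)).mono
      fun x hx => le_antisymm hx.1 hx.2
  have hderiv : deriv f =ᶠ[𝓝 a] fun _ => 0 := by simpa using hconst.deriv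
  simp [hderiv.deriv_eq] at hpos

theorem IsLocalMax.fderiv_fderiv_apply_self_nonpos {E : Type*} [NormedAddCommGroup E]
    [NormedSpace ℝ E] {f : E → ℝ} {a : E} (h : IsLocalMax f a) (hf : ContDiffAt ℝ 2 f a)
    (d : E) : fderiv ℝ (fderiv ℝ f) a d d ≤ 0 := by
  set L : ℝ → E := fun t => a + t • d
  have hL : ∀ t, HasDerivAt L d t := fun t => by
    simpa [L] using ((hasDerivAt_id t).smul_const d).const_add a
  have hL0 : L 0 = a := by simp [L]
  have hdiff : ∀ᶠ t in 𝓝 0, DifferentiableAt ℝ f (L t) := by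
    refine (hL 0).continuousAt.eventually (p := fun x => DifferentiableAt ℝ f x) ?_
    rw [hL0]
    exact (hf.eventually (by simp)).mono fun x hx => hx.differentiableAt (by simp)
  have hderiv : deriv (f ∘ L) =ᶠ[𝓝 0] fun t => fderiv ℝ f (L t) d :=
    hdiff.mono fun t ht => (ht.hasFDerivAt.comp_hasDerivAt t (hL t)).deriv
  have hderiv2 : HasDerivAt (fun t => fderiv ℝ f (L t) d) (fderiv ℝ (fderiv ℝ f) a d d) 0 := by
    have hf' : DifferentiableAt ℝ (fderiv ℝ f) (L 0) := by
      rw [hL0]; exact (hf.fderiv_right (m := 1) le_rfl).differentiableAt one_ne_zero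
    simpa [hL0] using (hf'.hasFDerivAt.comp_hasDerivAt 0 (hL 0)).clm_apply (hasDerivAt_const 0 d)
  have hmax : IsLocalMax (f ∘ L) 0 := (hL0 ▸ h).comp_continuous (hL 0).continuousAt
  calc fderiv ℝ (fderiv ℝ f) a d d = deriv (deriv (f ∘ L)) 0 := by
        rw [hderiv.deriv_eq, hderiv2.deriv]
    _ ≤ 0 := hmax.deriv_deriv_nonpos (hf.continuousAt.comp_of_eq (hL 0).continuousAt hL0)

open Matrix in
open scoped MatrixOrder ComplexOrder in
theorem Matrix.PosSemidef.trace_mul_nonneg {𝕜 ι : Type*} [RCLike 𝕜] [Fintype ι] [DecidableEq ι]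
    {A B : Matrix ι ι 𝕜} (hA : A.PosSemidef) (hB : B.PosSemidef) : 0 ≤ (A * B).trace := by
  set S := CFC.sqrt A
  have hS : Sᴴ = S := (CFC.sqrt_nonneg A).posSemidef.isHermitian
  calc 0 ≤ (S * B * Sᴴ).trace := (hB.mul_mul_conjTranspose_same S).trace_nonneg
    _ = (A * B).trace := by
      rw [hS, Matrix.trace_mul_cycle, ← CFC.sqrt_mul_sqrt_self A hA.nonneg]

theorem hessM_eq_toMatrix {n : ℕ} {w : EuclideanSpace ℝ (Fin n) → ℝ}
    {y : EuclideanSpace ℝ (Fin n)} (hw : DifferentiableAt ℝ (fderiv ℝ w) y) :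
    hessM w y = LinearMap.BilinForm.toMatrix (EuclideanSpace.basisFun (Fin n) ℝ).toBasis
      (fderiv ℝ (fderiv ℝ w) y).toLinearMap₁₂ := by
  ext i j
  simp [hessM, fderiv_clm_apply hw (differentiableAt_const _)]

theorem hessM_sub {n : ℕ} {u v : EuclideanSpace ℝ (Fin n) → ℝ} {y : EuclideanSpace ℝ (Fin n)}
    (hu : ContDiffAt ℝ 2 u y) (hv : ContDiffAt ℝ 2 v y) :
    hessM (u - v) y = hessM u y - hessM v y := by
  have hu' := hu.fderiv_right (m := 1) le_rfl
  have hv' := hv.fderiv_right (m := 1) le_rfl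
  have hfderiv : fderiv ℝ (u - v) =ᶠ[𝓝 y] fderiv ℝ u - fderiv ℝ v :=
    ((hu.eventually (by simp)).and (hv.eventually (by simp))).mono fun z hz =>
      fderiv_sub (hz.1.differentiableAt (by simp)) (hz.2.differentiableAt (by simp))
  have hdiff : DifferentiableAt ℝ (fderiv ℝ (u - v)) y :=
    ((hu'.sub hv').differentiableAt one_ne_zero).congr_of_eventuallyEq hfderiv
  rw [hessM_eq_toMatrix hdiff, hessM_eq_toMatrix (hu'.differentiableAt one_ne_zero),
    hessM_eq_toMatrix (hv'.differentiableAt one_ne_zero), hfderiv.fderiv_eq,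
    fderiv_sub (hu'.differentiableAt one_ne_zero) (hv'.differentiableAt one_ne_zero),
    map_sub, map_sub]

theorem IsLocalMax.posSemidef_neg_hessM {n : ℕ} {w : EuclideanSpace ℝ (Fin n) → ℝ}
    {y : EuclideanSpace ℝ (Fin n)} (h : IsLocalMax w y) (hw : ContDiffAt ℝ 2 w y) :
    (-hessM w y).PosSemidef := by
  set b := (EuclideanSpace.basisFun (Fin n) ℝ).toBasis
  rw [hessM_eq_toMatrix ((hw.fderiv_right (m := 1) le_rfl).differentiableAt one_ne_zero)]
  refine Matrix.PosSemidef.of_dotProduct_mulVec_nonneg ?_ fun x => ?_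
  · ext i j
    simpa [b] using ((hw.isSymmSndFDerivAt (by simp)).eq (b i) (b j)).symm
  · have := h.fderiv_fderiv_apply_self_nonpos hw (b.equivFun.symm x)
    rw [Matrix.neg_mulVec, dotProduct_neg, star_trivial,
      LinearMap.BilinForm.dotProduct_toMatrix_mulVec,
      ContinuousLinearMap.toLinearMap₁₂_apply_apply_apply]
    exact neg_nonneg.mpr this

theorem penalized_comparison_general
    (n : ℕ) (δ : ℝ) (hδ : 0 < δ)
    (A : EuclideanSpace ℝ (Fin n) → Matrix (Fin n) (Fin n) ℝ)
    (hApsd : ∀ y, (A y).PosSemidef)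
    (H : EuclideanSpace ℝ (Fin n) → EuclideanSpace ℝ (Fin n) → ℝ)
    (p : EuclideanSpace ℝ (Fin n))
    (u v : EuclideanSpace ℝ (Fin n) → ℝ)
    (hu : ContDiff ℝ 2 u) (hv : ContDiff ℝ 2 v)
    (huper : ZPeriodic u) (hvper : ZPeriodic v)
    (hsub : ∀ y, -((A y) * hessM u y).trace + H (gradient u y + p) y + δ * u y ≤ 0)
    (hsuper : ∀ y, 0 ≤ -((A y) * hessM v y).trace + H (gradient v y + p) y + δ * v y) :
    ∀ y, u y ≤ v y := by
  obtain ⟨y₀, hmax⟩ := (huper.sub hvper).exists_forall_le (hu.continuous.sub hv.continuous)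
  have hlocal : IsLocalMax (u - v) y₀ := Eventually.of_forall hmax
  have hgrad : gradient u y₀ = gradient v y₀ := by
    have h := hlocal.fderiv_eq_zero
    rw [fderiv_sub (hu.differentiable two_ne_zero y₀) (hv.differentiable two_ne_zero y₀),
      sub_eq_zero] at h
    rw [gradient, gradient, h]
  have htrace : (A y₀ * hessM u y₀).trace - (A y₀ * hessM v y₀).trace ≤ 0 := by
    have h := (hApsd y₀).trace_mul_nonneg (hlocal.posSemidef_neg_hessM (hu.sub hv).contDiffAt)
    rwa [hessM_sub hu.contDiffAt hv.contDiffAt, Matrix.mul_neg, Matrix.trace_neg,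
      Matrix.mul_sub, Matrix.trace_sub, neg_nonneg] at h
  have hy₀ : (u - v) y₀ ≤ 0 := by
    have h := hsub y₀
    rw [hgrad] at h
    exact nonpos_of_mul_nonpos_right (by rw [Pi.sub_apply]; linarith [hsuper y₀]) hδ
  exact fun y => sub_nonpos.mp ((hmax y).trans hy₀)

/-- Comparison principle for the δ-penalized cell equation: a classical periodic
subsolution lies below a classical periodic supersolution. -/
theorem penalized_comparison
    (n : ℕ) (hn : 1 ≤ n) (δ : ℝ) (hδ : 0 < δ)
    (A : EuclideanSpace ℝ (Fin n) → Matrix (Fin n) (Fin n) ℝ)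
    (hAsymm : ∀ y, (A y).IsSymm) (hApsd : ∀ y, (A y).PosSemidef)
    (H : EuclideanSpace ℝ (Fin n) → EuclideanSpace ℝ (Fin n) → ℝ)
    (p : EuclideanSpace ℝ (Fin n))
    (u v : EuclideanSpace ℝ (Fin n) → ℝ)
    (hu : ContDiff ℝ 2 u) (hv : ContDiff ℝ 2 v)
    (huper : ZPeriodic u) (hvper : ZPeriodic v)
    (hsub : ∀ y, -((A y) * hessM u y).trace + H (gradient u y + p) y + δ * u y ≤ 0)
    (hsuper : ∀ y, 0 ≤ -((A y) * hessM v y).trace + H (gradient v y + p) y + δ * v y) :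
    ∀ y, u y ≤ v y :=
  penalized_comparison_general n δ hδ A hApsd H p u v hu hv huper hvper hsub hsuper
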